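/- arXiv:1610.08885 — 2 statements merged into one kernel-verified Lean document; each statement's English description precedes it below -/
import Mathlib

section
/- The largest eigenvalue λ_max of Ψ has a one-dimensional eigenspace, and every eigenvector v of Ψ for λ_max has all entries nonzero of the same sign (i.e., either v_i > 0 for all i, or v_i < 0 for all i). Likewise, the smallest eigenvalue λ_min of Ψ has a one-dimensional eigenspace, and every eigenvector v of Ψ for λ_min has all entries nonzero with alternating signs (i.e., either (−1)^i v_i > 0 for all i, or (−1)^i v_i < 0 for all i). -/
/-!
Ψ is symmetric with positive entries. If `Ψ v = λ_max v`, the Rayleigh quotient does not decrease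
under `v ↦ |v|`, so `|v|` and `|v| + v` are again eigenvectors for `λ_max`; a nonnegative
eigenvector of a positive matrix is zero or strictly positive, which forces `v` to have constant
sign.

Ψ is positive definite and, by Cramer's rule, `Ψ⁻¹` has the checkerboard sign pattern, because
Cauchy determinants with increasing positive nodes are positive. So `D Ψ⁻¹ D`, with
`D = diag((-1)^i)`, is again symmetric with positive entries; its top eigenvalue is `1 / λ_min`,
with eigenvector `D v`.

In both cases no nonzero eigenvector has a zero coordinate, so the eigenspace is a line.
-/

open Matrix MeasureTheory Set Polynomial

noncomputable def cauchyPsi (n : ℕ) (lam : Fin n → ℝ) : Matrix (Fin n) (Fin n) ℝ :=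
  Matrix.of fun i j => 1 / (lam i + lam j)

namespace Matrix

section Field

variable {K ι : Type*} [Field K] [Fintype ι]

theorem mem_spectrum_iff_exists_mulVec_eq_smul [DecidableEq ι] {A : Matrix ι ι K} {μ : K} :
    μ ∈ spectrum K A ↔ ∃ v, v ≠ 0 ∧ A *ᵥ v = μ • v := by
  rw [← spectrum_toLin', ← Module.End.hasEigenvalue_iff_mem_spectrum,
    Module.End.hasEigenvalue_iff, Submodule.ne_bot_iff]
  simp only [Module.End.mem_eigenspace_iff, toLin'_apply]
  exact exists_congr fun v => and_comm

theorem exists_eq_smul_of_eigenvectors_ne_zero {A : Matrix ι ι K} {μ : K} {v w : ι → K}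
    (h : ∀ u, u ≠ 0 → A *ᵥ u = μ • u → ∀ i, u i ≠ 0)
    (hv0 : v ≠ 0) (hv : A *ᵥ v = μ • v) (hw : A *ᵥ w = μ • w) : ∃ c : K, w = c • v := by
  obtain ⟨i, hi⟩ := Function.ne_iff.1 hv0
  refine ⟨w i / v i, sub_eq_zero.1 ?_⟩
  by_contra hz
  refine h _ hz ?_ i ?_
  · rw [mulVec_sub, mulVec_smul, hv, hw, smul_sub, smul_comm]
  · simp [div_mul_cancel₀ _ hi]

end Field

variable {ι : Type*} [Fintype ι] {A : Matrix ι ι ℝ} {μ : ℝ} {v : ι → ℝ}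

theorem IsHermitian.isGreatest_sSup_spectrum [DecidableEq ι] [Nonempty ι] (hA : A.IsHermitian) :
    IsGreatest (spectrum ℝ A) (sSup (spectrum ℝ A)) := by
  rw [hA.spectrum_real_eq_range_eigenvalues]
  exact ⟨(range_nonempty _).csSup_mem (finite_range _), fun _ => le_csSup (finite_range _).bddAbove⟩

theorem IsHermitian.isLeast_sInf_spectrum [DecidableEq ι] [Nonempty ι] (hA : A.IsHermitian) :
    IsLeast (spectrum ℝ A) (sInf (spectrum ℝ A)) := by
  rw [hA.spectrum_real_eq_range_eigenvalues]
  exact ⟨(range_nonempty _).csInf_mem (finite_range _), fun _ => csInf_le (finite_range _).bddBelow⟩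

theorem IsHermitian.mulVec_eq_smul_of_le_dotProduct [DecidableEq ι] (hA : A.IsHermitian)
    (hμ : μ ∈ upperBounds (spectrum ℝ A)) (h : μ * (v ⬝ᵥ v) ≤ v ⬝ᵥ A *ᵥ v) :
    A *ᵥ v = μ • v := by
  have hB : (algebraMap ℝ _ μ - A).PosSemidef := by
    refine posSemidef_iff_isHermitian_and_spectrum_nonneg.2 ⟨?_, ?_⟩
    · exact (isHermitian_diagonal_of_self_adjoint _ (by ext; simp)).sub hA
    · rw [← spectrum.singleton_sub_eq]
      rintro _ ⟨_, rfl, ν, hν, rfl⟩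
      exact sub_nonneg.2 (hμ hν)
  have hBv : (algebraMap ℝ _ μ - A) *ᵥ v = μ • v - A *ᵥ v := by
    rw [sub_mulVec, Algebra.algebraMap_eq_smul_one, smul_mulVec, one_mulVec]
  have hq : v ⬝ᵥ (algebraMap ℝ _ μ - A) *ᵥ v = μ * (v ⬝ᵥ v) - v ⬝ᵥ A *ᵥ v := by
    rw [hBv, dotProduct_sub, dotProduct_smul, smul_eq_mul]
  have h0 : v ⬝ᵥ (algebraMap ℝ _ μ - A) *ᵥ v = 0 :=
    le_antisymm (hq ▸ sub_nonpos.2 h) (by simpa using hB.dotProduct_mulVec_nonneg v)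
  rw [eq_comm, ← sub_eq_zero, ← hBv]
  exact (hB.dotProduct_mulVec_zero_iff v).1 (by simpa using h0)

theorem dotProduct_mulVec_le_abs (hA : ∀ i j, 0 ≤ A i j) (v : ι → ℝ) :
    v ⬝ᵥ A *ᵥ v ≤ |v| ⬝ᵥ A *ᵥ |v| := by
  simp only [dotProduct, mulVec, Finset.mul_sum, Pi.abs_apply]
  refine Finset.sum_le_sum fun i _ => Finset.sum_le_sum fun j _ => ?_
  calc v i * (A i j * v j) ≤ |v i * (A i j * v j)| := le_abs_self _
    _ = |v i| * (A i j * |v j|) := by rw [abs_mul, abs_mul, abs_of_nonneg (hA i j)]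

theorem IsHermitian.mulVec_abs_eq_smul [DecidableEq ι] (hA : A.IsHermitian)
    (hA0 : ∀ i j, 0 ≤ A i j) (hμ : μ ∈ upperBounds (spectrum ℝ A)) (hv : A *ᵥ v = μ • v) :
    A *ᵥ |v| = μ • |v| := by
  refine hA.mulVec_eq_smul_of_le_dotProduct hμ ?_
  calc μ * (|v| ⬝ᵥ |v|) = v ⬝ᵥ A *ᵥ v := by
        rw [hv, dotProduct_smul, smul_eq_mul]
        simp [dotProduct, abs_mul_abs_self]
    _ ≤ |v| ⬝ᵥ A *ᵥ |v| := dotProduct_mulVec_le_abs hA0 v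

theorem pos_of_mulVec_eq_smul (hA : ∀ i j, 0 < A i j) (hv : 0 ≤ v) (hv0 : v ≠ 0)
    (h : A *ᵥ v = μ • v) (i : ι) : 0 < v i := by
  obtain ⟨j, hj⟩ := Function.ne_iff.1 hv0
  have hvj : 0 < v j := (hv j).lt_of_ne' hj
  have hAv : 0 < μ * v i := by
    rw [← smul_eq_mul, ← Pi.smul_apply, ← h]
    refine (mul_pos (hA i j) hvj).trans_le ?_
    exact Finset.single_le_sum (f := fun k => A i k * v k)
      (fun k _ => mul_nonneg (hA i k).le (hv k)) (Finset.mem_univ j)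
  exact (hv i).lt_of_ne' (right_ne_zero_of_mul hAv.ne')

theorem IsHermitian.sign_of_mulVec_eq_smul [DecidableEq ι] (hA : A.IsHermitian)
    (hA0 : ∀ i j, 0 < A i j) (hμ : μ ∈ upperBounds (spectrum ℝ A)) (hv0 : v ≠ 0)
    (hv : A *ᵥ v = μ • v) : (∀ i, 0 < v i) ∨ (∀ i, v i < 0) := by
  have habs := hA.mulVec_abs_eq_smul (fun i j => (hA0 i j).le) hμ hv
  have hw : A *ᵥ (|v| + v) = μ • (|v| + v) := by rw [mulVec_add, habs, hv, smul_add]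
  have hw0 : 0 ≤ |v| + v := fun i => neg_le_iff_add_nonneg'.1 (neg_abs_le (v i))
  by_cases hz : |v| + v = 0
  · refine .inr fun i => ?_
    have := pos_of_mulVec_eq_smul hA0 (abs_nonneg v) (mt (Pi.abs_eq_zero v).1 hv0) habs i
    have := congrFun hz i
    simp only [Pi.add_apply, Pi.abs_apply, Pi.zero_apply] at *
    linarith
  · refine .inl fun i => ?_
    have := pos_of_mulVec_eq_smul hA0 hw0 hz hw i
    simp only [Pi.add_apply, Pi.abs_apply] at this
    cases abs_cases (v i) <;> linarith

variable [DecidableEq ι]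

theorem PosDef.pos_of_mem_spectrum (hA : A.PosDef) (hμ : μ ∈ spectrum ℝ A) : 0 < μ := by
  obtain ⟨i, rfl⟩ := hA.isHermitian.spectrum_real_eq_range_eigenvalues ▸ hμ
  exact hA.eigenvalues_pos i

theorem inv_mulVec_eq_inv_smul (hA : IsUnit A.det) (hμ : μ ≠ 0) (h : A *ᵥ v = μ • v) :
    A⁻¹ *ᵥ v = μ⁻¹ • v := by
  rw [eq_inv_smul_iff₀ hμ, ← mulVec_smul, ← h, mulVec_mulVec, nonsing_inv_mul _ hA, one_mulVec]

theorem spectrum_diagonal_mul_inv_mul_diagonal (hA : IsUnit A) {d : ι → ℝ}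
    (hd : diagonal d * diagonal d = 1) :
    spectrum ℝ (diagonal d * A⁻¹ * diagonal d) = (spectrum ℝ A)⁻¹ := by
  let u : (Matrix ι ι ℝ)ˣ := ⟨diagonal d, diagonal d, hd, hd⟩
  rw [show diagonal d * A⁻¹ * diagonal d = u * A⁻¹ * ↑u⁻¹ from rfl, spectrum.units_conjugate]
  simpa using (spectrum.map_inv (𝕜 := ℝ) hA.unit).symm

/-- `D A⁻¹ D` with `D = diagonal d` has positive entries and top eigenvalue `μ⁻¹`, with
eigenvector `D v`. -/
theorem PosDef.sign_of_mulVec_eq_smul (hA : A.PosDef) {d : ι → ℝ} (hd : ∀ i, d i * d i = 1)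
    (hinv : ∀ i j, 0 < d i * A⁻¹ i j * d j) (hμ : μ ∈ lowerBounds (spectrum ℝ A))
    (hv0 : v ≠ 0) (hv : A *ᵥ v = μ • v) : (∀ i, 0 < d i * v i) ∨ (∀ i, d i * v i < 0) := by
  set D := diagonal d
  have hDD : D * D = 1 := by
    rw [diagonal_mul_diagonal, ← diagonal_one]
    exact congrArg diagonal (funext hd)
  have hμpos : 0 < μ :=
    hA.pos_of_mem_spectrum (mem_spectrum_iff_exists_mulVec_eq_smul.2 ⟨v, hv0, hv⟩)
  have hM : (D * A⁻¹ * D).IsHermitian := by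
    simpa [D] using isHermitian_mul_mul_conjTranspose D hA.isHermitian.inv
  have hMpos : ∀ i j, 0 < (D * A⁻¹ * D) i j := fun i j => by
    simpa [D, diagonal_mul, mul_diagonal] using hinv i j
  have hub : μ⁻¹ ∈ upperBounds (spectrum ℝ (D * A⁻¹ * D)) := by
    rw [spectrum_diagonal_mul_inv_mul_diagonal hA.isUnit hDD]
    intro ν hν
    simpa using inv_anti₀ hμpos (hμ hν)
  have hDv0 : D *ᵥ v ≠ 0 := fun h =>
    hv0 (by rw [← one_mulVec v, ← hDD, ← mulVec_mulVec, h, mulVec_zero])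
  have hMv : (D * A⁻¹ * D) *ᵥ (D *ᵥ v) = μ⁻¹ • (D *ᵥ v) := by
    rw [mulVec_mulVec, mul_assoc, hDD, mul_one, ← mulVec_mulVec,
      inv_mulVec_eq_inv_smul ((isUnit_iff_isUnit_det A).1 hA.isUnit) hμpos.ne' hv, mulVec_smul]
  simpa only [D, mulVec_diagonal] using hM.sign_of_mulVec_eq_smul hMpos hub hDv0 hMv

end Matrix

variable {K ι κ : Type*} [Field K]

def cauchyMatrix (x : ι → K) (y : κ → K) : Matrix ι κ K :=
  of fun i j => 1 / (x i + y j)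

theorem cauchyMatrix_submatrix {ι' κ' : Type*} (x : ι → K) (y : κ → K) (f : ι' → ι) (g : κ' → κ) :
    (cauchyMatrix x y).submatrix f g = cauchyMatrix (x ∘ f) (y ∘ g) :=
  rfl

variable [Fintype ι]

/-- For `c` in the kernel, `∑ⱼ cⱼ / (X + yⱼ)` vanishes at every `xᵢ`. Up to the nodal polynomial
this is the Lagrange interpolant at the nodes `-yⱼ` of the values `cⱼ / wⱼ` (barycentric form,
`wⱼ` the nodal weights), a polynomial of degree `< card ι`, so it vanishes identically. -/
theorem det_cauchyMatrix_ne_zero [DecidableEq ι] {x y : ι → K} (hx : x.Injective)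
    (hy : y.Injective) (hxy : ∀ i j, x i + y j ≠ 0) : (cauchyMatrix x y).det ≠ 0 := by
  intro hdet
  obtain ⟨c, hc0, hc⟩ := exists_mulVec_eq_zero_iff.2 hdet
  have hinj : Set.InjOn (-y) (Finset.univ : Finset ι) := (neg_injective.comp hy).injOn
  set r : ι → K := fun j => c j / Lagrange.nodalWeight .univ (-y) j
  have hP : Lagrange.interpolate .univ (-y) r = 0 := by
    refine eq_zero_of_degree_lt_of_eval_index_eq_zero _ hx.injOn
      (Lagrange.degree_interpolate_lt r hinj) fun i _ => ?_
    have hnode : ∀ j ∈ Finset.univ, x i ≠ (-y) j := fun j _ => by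
      simpa [eq_neg_iff_add_eq_zero] using hxy i j
    rw [Lagrange.eval_interpolate_not_at_node r hnode]
    have hci : ∑ j, c j / (x i + y j) = 0 := by
      simpa [mulVec, dotProduct, cauchyMatrix, div_eq_mul_inv, mul_comm] using congrFun hc i
    convert mul_zero _
    rw [← hci]
    refine Finset.sum_congr rfl fun j _ => ?_
    have := Lagrange.nodalWeight_ne_zero hinj (Finset.mem_univ j)
    simp only [r, Pi.neg_apply, sub_neg_eq_add]
    field_simp
  apply hc0
  funext j
  have := Lagrange.eval_interpolate_at_node r hinj (Finset.mem_univ j)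
  rw [hP, eval_zero, eq_comm, div_eq_zero_iff] at this
  exact this.resolve_right (Lagrange.nodalWeight_ne_zero hinj (Finset.mem_univ j))

theorem one_div_eq_integral_exp_neg_mul {a : ℝ} (ha : 0 < a) :
    1 / a = ∫ t in Ioi 0, Real.exp (-a * t) := by
  rw [integral_exp_mul_Ioi (neg_neg_of_pos ha), mul_zero, Real.exp_zero, neg_div_neg_eq]

/-- `1 / (a + b) = ∫₀^∞ e^{-at} e^{-bt} dt`, so the quadratic form is
`∫₀^∞ (∑ᵢ cᵢ e^{-xᵢ t})² dt`. -/
theorem cauchyMatrix_posSemidef {x : ι → ℝ} (hx : ∀ i, 0 < x i) :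
    (cauchyMatrix x x).PosSemidef := by
  refine posSemidef_iff_dotProduct_mulVec.2 ⟨?_, fun c => ?_⟩
  · ext i j
    simp [cauchyMatrix, add_comm]
  let g : ι → ι → ℝ → ℝ := fun i j t => c i * c j * Real.exp (-(x i + x j) * t)
  have hg : ∀ i j, IntegrableOn (g i j) (Ioi 0) := fun i j =>
    (integrableOn_exp_mul_Ioi (by linarith [hx i, hx j]) 0).const_mul _
  calc 0 ≤ ∫ t in Ioi 0, (∑ i, c i * Real.exp (-x i * t)) ^ 2 :=
        setIntegral_nonneg measurableSet_Ioi fun t _ => sq_nonneg _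
    _ = ∫ t in Ioi 0, ∑ i, ∑ j, g i j t := by
        congr 1; ext t
        simp only [sq, Finset.sum_mul_sum, g, neg_add, add_mul, Real.exp_add]
        exact Finset.sum_congr rfl fun i _ => Finset.sum_congr rfl fun j _ => by ring
    _ = ∑ i, ∑ j, ∫ t in Ioi 0, g i j t := by
        rw [integral_finsetSum _ fun i _ => integrable_finsetSum _ fun j _ => hg i j]
        exact Finset.sum_congr rfl fun i _ => integral_finsetSum _ fun j _ => hg i j
    _ = star c ⬝ᵥ cauchyMatrix x x *ᵥ c := by
        simp only [g, integral_const_mul, ← one_div_eq_integral_exp_neg_mul (add_pos (hx _) (hx _)),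
          star_trivial, dotProduct, mulVec, cauchyMatrix, of_apply, Finset.mul_sum]
        exact Finset.sum_congr rfl fun i _ => Finset.sum_congr rfl fun j _ => by ring

theorem cauchyMatrix_posDef [DecidableEq ι] {x : ι → ℝ} (hx : ∀ i, 0 < x i) (hinj : x.Injective) :
    (cauchyMatrix x x).PosDef :=
  (cauchyMatrix_posSemidef hx).posDef_iff_det_ne_zero.2
    (det_cauchyMatrix_ne_zero hinj hinj fun i j => (add_pos (hx i) (hx j)).ne')

/-- The determinant does not vanish on the convex set of increasing positive `y`, and it is
positive at `y = x`. -/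
theorem det_cauchyMatrix_pos [LinearOrder ι] {x y : ι → ℝ} (hx : ∀ i, 0 < x i)
    (hy : ∀ i, 0 < y i) (hxm : StrictMono x) (hym : StrictMono y) :
    0 < (cauchyMatrix x y).det := by
  let S : Set (ι → ℝ) := {z | StrictMono z ∧ ∀ i, 0 < z i}
  have hS : Convex ℝ S := by
    rintro z ⟨hzm, hz⟩ w ⟨hwm, hw⟩ a b ha hb hab
    refine ⟨fun i j hij => ?_, fun i => convex_Ioi (0 : ℝ) (hz i) (hw i) ha hb hab⟩
    have := convex_Ioi (0 : ℝ) (sub_pos.2 (hzm hij)) (sub_pos.2 (hwm hij)) ha hb hab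
    simp only [mem_Ioi, smul_eq_mul] at this
    simp only [Pi.add_apply, Pi.smul_apply, smul_eq_mul]
    linarith
  have hne : ∀ z ∈ S, (cauchyMatrix x z).det ≠ 0 := fun z hz =>
    det_cauchyMatrix_ne_zero hxm.injective hz.1.injective fun i j => (add_pos (hx i) (hz.2 j)).ne'
  have hcont : ContinuousOn (fun z => (cauchyMatrix x z).det) S := by
    refine continuous_id.matrix_det.comp_continuousOn
      (continuousOn_pi.2 fun i => continuousOn_pi.2 fun j => ?_)
    exact continuousOn_const.div (by fun_prop) fun z hz => (add_pos (hx i) (hz.2 j)).ne'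
  have hxpos : 0 < (cauchyMatrix x x).det := (cauchyMatrix_posDef hx hxm.injective).det_pos
  by_contra! h
  obtain ⟨z, hz, hz0⟩ :=
    hS.isPreconnected.intermediate_value ⟨hym, hy⟩ ⟨hxm, hx⟩ hcont ⟨h, hxpos.le⟩
  exact hne z hz hz0

/-- By Cramer's rule, `(-1)^(i+j) C⁻¹ i j` is a ratio of two Cauchy determinants with increasing
positive nodes. -/
theorem cauchyMatrix_inv_checkerboard_pos {n : ℕ} {x : Fin n → ℝ} (hx : ∀ i, 0 < x i)
    (hxm : StrictMono x) (i j : Fin n) :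
    0 < (-1) ^ (i : ℕ) * (cauchyMatrix x x)⁻¹ i j * (-1) ^ (j : ℕ) := by
  cases n with
  | zero => exact i.elim0
  | succ m =>
    have hdet := det_cauchyMatrix_pos hx hx hxm hxm
    have hminor : 0 < ((cauchyMatrix x x).submatrix j.succAbove i.succAbove).det := by
      rw [cauchyMatrix_submatrix]
      exact det_cauchyMatrix_pos (fun _ => hx _) (fun _ => hx _)
        (hxm.comp (Fin.strictMono_succAbove j)) (hxm.comp (Fin.strictMono_succAbove i))
    have hsign : (-1 : ℝ) ^ (i : ℕ) * (-1) ^ ((j : ℕ) + i) * (-1) ^ (j : ℕ) = 1 := by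
      rw [← pow_add, ← pow_add]
      exact Even.neg_one_pow ⟨i + j, by ring⟩
    rw [inv_def, Ring.inverse_eq_inv, Matrix.smul_apply, smul_eq_mul,
      adjugate_fin_succ_eq_det_submatrix]
    set d := (cauchyMatrix x x).det
    set d' := ((cauchyMatrix x x).submatrix j.succAbove i.succAbove).det
    have : (-1) ^ (i : ℕ) * (d⁻¹ * ((-1) ^ ((j : ℕ) + i) * d')) * (-1) ^ (j : ℕ) = d⁻¹ * d' := by
      linear_combination d⁻¹ * d' * hsign
    rw [this]
    positivity

/-- The largest eigenvalue of `Ψ` is simple with an eigenvector of constant sign, and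
the smallest eigenvalue of `Ψ` is simple with an eigenvector of alternating signs. -/
theorem Psi_extreme_eigenvectors (n : ℕ) (hn : 0 < n) (lam : Fin n → ℝ)
    (hpos : ∀ i, 0 < lam i) (hmono : StrictMono lam) :
    ((∃ v : Fin n → ℝ, v ≠ 0 ∧
        (cauchyPsi n lam).mulVec v = sSup (spectrum ℝ (cauchyPsi n lam)) • v) ∧
      ∀ v : Fin n → ℝ, v ≠ 0 →
        (cauchyPsi n lam).mulVec v = sSup (spectrum ℝ (cauchyPsi n lam)) • v →
          ((∀ i, 0 < v i) ∨ (∀ i, v i < 0)) ∧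
          ∀ w : Fin n → ℝ,
            (cauchyPsi n lam).mulVec w = sSup (spectrum ℝ (cauchyPsi n lam)) • w →
              ∃ c : ℝ, w = c • v) ∧
    ((∃ v : Fin n → ℝ, v ≠ 0 ∧
        (cauchyPsi n lam).mulVec v = sInf (spectrum ℝ (cauchyPsi n lam)) • v) ∧
      ∀ v : Fin n → ℝ, v ≠ 0 →
        (cauchyPsi n lam).mulVec v = sInf (spectrum ℝ (cauchyPsi n lam)) • v →
          ((∀ i : Fin n, 0 < (-1 : ℝ) ^ (i : ℕ) * v i) ∨
            (∀ i : Fin n, (-1 : ℝ) ^ (i : ℕ) * v i < 0)) ∧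
          ∀ w : Fin n → ℝ,
            (cauchyPsi n lam).mulVec w = sInf (spectrum ℝ (cauchyPsi n lam)) • w →
              ∃ c : ℝ, w = c • v) := by
  have : Nonempty (Fin n) := ⟨⟨0, hn⟩⟩
  have hΨ : (cauchyPsi n lam).PosDef := cauchyMatrix_posDef hpos hmono.injective
  obtain ⟨hmax, hmax_ub⟩ := hΨ.isHermitian.isGreatest_sSup_spectrum
  obtain ⟨hmin, hmin_lb⟩ := hΨ.isHermitian.isLeast_sInf_spectrum
  have hsign_max := fun (v : Fin n → ℝ) => hΨ.isHermitian.sign_of_mulVec_eq_smul (v := v)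
    (fun i j => one_div_pos.2 (add_pos (hpos i) (hpos j))) hmax_ub
  have hsign_min := fun (v : Fin n → ℝ) => hΨ.sign_of_mulVec_eq_smul (v := v)
    (fun i => by rw [← mul_pow, neg_one_mul, neg_neg, one_pow])
    (cauchyMatrix_inv_checkerboard_pos hpos hmono) hmin_lb
  refine ⟨⟨mem_spectrum_iff_exists_mulVec_eq_smul.1 hmax, fun v hv0 hv =>
      ⟨hsign_max v hv0 hv, fun w hw => exists_eq_smul_of_eigenvectors_ne_zero ?_ hv0 hv hw⟩⟩,
    ⟨mem_spectrum_iff_exists_mulVec_eq_smul.1 hmin, fun v hv0 hv =>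
      ⟨hsign_min v hv0 hv, fun w hw => exists_eq_smul_of_eigenvectors_ne_zero ?_ hv0 hv hw⟩⟩⟩
  · intro u hu0 hu i
    rcases hsign_max u hu0 hu with h | h
    exacts [(h i).ne', (h i).ne]
  · intro u hu0 hu i
    rcases hsign_min u hu0 hu with h | h
    exacts [right_ne_zero_of_mul (h i).ne', right_ne_zero_of_mul (h i).ne]
end

section
/- Let b ∈ ℝ^n be a unit vector with all entries nonzero, let λ be the smallest eigenvalue of W(b), and let x be a unit eigenvector of W(b) for λ. Suppose b is a critical point of ξ(b) := smallest eigenvalue of W(b) on the unit sphere, in the sense that for every v ∈ ℝ^n with vᵀ b = 0 the function t ↦ ξ(b + t v) has derivative 0 at t = 0. Then W(x) b = λ b (in addition to W(b) x = λ x). -/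
open Matrix BigOperators

/-- `W(b) = diag(b) Ψ diag(b)`. -/
noncomputable def cauchyW (n : ℕ) (lam : Fin n → ℝ) (b : Fin n → ℝ) :
    Matrix (Fin n) (Fin n) ℝ :=
  Matrix.diagonal b * cauchyPsi n lam * Matrix.diagonal b

/-!
The quadratic form `x ↦ xᵀ W(c) x` is symmetric in its two vectors: `xᵀ W(c) x = cᵀ W(x) c`,
both being `∑ᵢⱼ xᵢ cᵢ Ψᵢⱼ cⱼ xⱼ`. For `v ⊥ b`, the Rayleigh bound gives
`ξ(b + t v) ≤ xᵀ W(b + t v) x = (b + t v)ᵀ W(x) (b + t v)` with equality at `t = 0`, so the two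
sides have the same derivative at `0`: `0 = 2 vᵀ W(x) b`. Hence `W(x) b` is a multiple of `b`,
and the multiple is `bᵀ W(x) b = xᵀ W(b) x = λ`.
-/

section

variable {ι : Type*} [Fintype ι]

lemma sInf_spectrum_le_dotProduct_mulVec [DecidableEq ι] {M : Matrix ι ι ℝ}
    (hM : M.IsHermitian) {y : ι → ℝ} (hy : y ⬝ᵥ y = 1) :
    sInf (spectrum ℝ M) ≤ y ⬝ᵥ M *ᵥ y := by
  set c := sInf (spectrum ℝ M)
  have hpsd : (M - algebraMap ℝ _ c).PosSemidef := by
    have hc : (algebraMap ℝ (Matrix ι ι ℝ) c).IsHermitian := by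
      rw [algebraMap_eq_diagonal]
      exact isHermitian_diagonal _
    refine posSemidef_iff_isHermitian_and_spectrum_nonneg.mpr ⟨hM.sub hc, ?_⟩
    rw [← spectrum.sub_singleton_eq]
    rintro _ ⟨μ, hμ, _, rfl, rfl⟩
    exact sub_nonneg.mpr (csInf_le finite_real_spectrum.bddBelow hμ)
  have := hpsd.dotProduct_mulVec_nonneg y
  simp only [star_trivial, sub_mulVec, Algebra.algebraMap_eq_smul_one, smul_mulVec, one_mulVec,
    dotProduct_sub, dotProduct_smul, hy, smul_eq_mul, mul_one] at this
  linarith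

lemma dotProduct_mulVec_comm_of_isSymm {A : Matrix ι ι ℝ} (hA : A.IsSymm) (v w : ι → ℝ) :
    v ⬝ᵥ A *ᵥ w = w ⬝ᵥ A *ᵥ v := by
  rw [dotProduct_mulVec, ← mulVec_transpose, hA.eq, dotProduct_comm]

lemma dotProduct_diagonal_mul_mul_diagonal_mulVec [DecidableEq ι] (A : Matrix ι ι ℝ)
    (c x : ι → ℝ) :
    x ⬝ᵥ (diagonal c * A * diagonal c) *ᵥ x = c ⬝ᵥ (diagonal x * A * diagonal x) *ᵥ c := by
  simp only [dotProduct, mulVec, mul_diagonal, diagonal_mul, Finset.mul_sum]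
  exact Finset.sum_congr rfl fun i _ => Finset.sum_congr rfl fun j _ => by ring

lemma hasDerivAt_dotProduct_mulVec_line (A : Matrix ι ι ℝ) (b v : ι → ℝ) :
    HasDerivAt (fun t : ℝ => (b + t • v) ⬝ᵥ A *ᵥ (b + t • v))
      (v ⬝ᵥ A *ᵥ b + b ⬝ᵥ A *ᵥ v) 0 := by
  have hexpand : (fun t : ℝ => (b + t • v) ⬝ᵥ A *ᵥ (b + t • v)) =
      fun t => b ⬝ᵥ A *ᵥ b + t * (v ⬝ᵥ A *ᵥ b + b ⬝ᵥ A *ᵥ v) + t ^ 2 * (v ⬝ᵥ A *ᵥ v) := by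
    ext t
    simp only [mulVec_add, mulVec_smul, add_dotProduct, dotProduct_add, smul_dotProduct,
      dotProduct_smul, smul_eq_mul]
    ring
  rw [hexpand]
  simpa using (((hasDerivAt_id (0 : ℝ)).mul_const _).const_add _).fun_add
    ((hasDerivAt_pow 2 (0 : ℝ)).mul_const (v ⬝ᵥ A *ᵥ v))

lemma eq_dotProduct_smul_of_forall_orthogonal {b w : ι → ℝ} (hb : b ⬝ᵥ b = 1)
    (hw : ∀ v, v ⬝ᵥ b = 0 → v ⬝ᵥ w = 0) : w = (w ⬝ᵥ b) • b := by
  set v := w - (w ⬝ᵥ b) • b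
  have hvb : v ⬝ᵥ b = 0 := by simp [v, sub_dotProduct, hb]
  have hvv : v ⬝ᵥ v = 0 := by
    rw [dotProduct_sub, dotProduct_smul, hw v hvb, hvb, smul_zero, sub_zero]
  exact sub_eq_zero.mp (dotProduct_self_eq_zero.mp hvv)

end

lemma HasDerivAt.eq_of_le_of_eq {f g : ℝ → ℝ} {f' g' a : ℝ} (hf : HasDerivAt f f' a)
    (hg : HasDerivAt g g' a) (hle : ∀ t, f t ≤ g t) (heq : f a = g a) : f' = g' := by
  have hmin : IsLocalMin (fun t => g t - f t) a :=
    Filter.Eventually.of_forall fun t => by simp only [heq, sub_self]; linarith [hle t]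
  linarith [hmin.hasDerivAt_eq_zero (hg.sub hf)]

lemma cauchyPsi_isHermitian (n : ℕ) (lam : Fin n → ℝ) : (cauchyPsi n lam).IsHermitian := by
  ext i j
  simp [cauchyPsi, add_comm]

lemma cauchyW_isHermitian (n : ℕ) (lam : Fin n → ℝ) (c : Fin n → ℝ) :
    (cauchyW n lam c).IsHermitian := by
  simpa [cauchyW] using
    isHermitian_conjTranspose_mul_mul (diagonal c) (cauchyPsi_isHermitian n lam)

lemma dotProduct_cauchyW_mulVec_self_comm (n : ℕ) (lam : Fin n → ℝ) (c x : Fin n → ℝ) :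
    x ⬝ᵥ cauchyW n lam c *ᵥ x = c ⬝ᵥ cauchyW n lam x *ᵥ c :=
  dotProduct_diagonal_mul_mul_diagonal_mulVec _ c x

theorem critical_point_symmetry_general (n : ℕ) (lam : Fin n → ℝ)
    (b : Fin n → ℝ) (hb_unit : ∑ i, b i ^ 2 = 1)
    (x : Fin n → ℝ) (hx_unit : ∑ i, x i ^ 2 = 1)
    (hx_eig : (cauchyW n lam b).mulVec x =
      sInf (spectrum ℝ (cauchyW n lam b)) • x)
    (hcrit : ∀ v : Fin n → ℝ, v ⬝ᵥ b = 0 →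
      HasDerivAt (fun t : ℝ => sInf (spectrum ℝ (cauchyW n lam (b + t • v)))) 0 0) :
    (cauchyW n lam x).mulVec b = sInf (spectrum ℝ (cauchyW n lam b)) • b := by
  have hb : b ⬝ᵥ b = 1 := by simpa [dotProduct, sq] using hb_unit
  have hx : x ⬝ᵥ x = 1 := by simpa [dotProduct, sq] using hx_unit
  have hWx_symm := isHermitian_iff_isSymm.mp (cauchyW_isHermitian n lam x)
  have hform : b ⬝ᵥ cauchyW n lam x *ᵥ b = sInf (spectrum ℝ (cauchyW n lam b)) := by
    rw [← dotProduct_cauchyW_mulVec_self_comm, hx_eig, dotProduct_smul, hx, smul_eq_mul, mul_one]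
  have horth : ∀ v, v ⬝ᵥ b = 0 → v ⬝ᵥ cauchyW n lam x *ᵥ b = 0 := by
    intro v hv
    have hderiv := (hcrit v hv).eq_of_le_of_eq
      (hasDerivAt_dotProduct_mulVec_line (cauchyW n lam x) b v)
      (fun t => dotProduct_cauchyW_mulVec_self_comm n lam (b + t • v) x ▸
        sInf_spectrum_le_dotProduct_mulVec (cauchyW_isHermitian n lam _) hx)
      (by simpa using hform.symm)
    rw [dotProduct_mulVec_comm_of_isSymm hWx_symm b v] at hderiv
    linarith
  rw [eq_dotProduct_smul_of_forall_orthogonal hb horth, dotProduct_comm, hform]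

/-- At a critical point `b` of `ξ(b) = λ_min(W(b))` on the unit sphere, with `λ` the
smallest eigenvalue of `W(b)` and `x` a unit eigenvector for `λ`, one also has
`W(x) b = λ b`. -/
theorem critical_point_symmetry (n : ℕ) (hn : 0 < n) (lam : Fin n → ℝ)
    (hpos : ∀ i, 0 < lam i) (hmono : StrictMono lam)
    (b : Fin n → ℝ) (hb_unit : ∑ i, b i ^ 2 = 1) (hb : ∀ i, b i ≠ 0)
    (x : Fin n → ℝ) (hx_unit : ∑ i, x i ^ 2 = 1)
    (hx_eig : (cauchyW n lam b).mulVec x =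
      sInf (spectrum ℝ (cauchyW n lam b)) • x)
    (hcrit : ∀ v : Fin n → ℝ, v ⬝ᵥ b = 0 →
      HasDerivAt (fun t : ℝ => sInf (spectrum ℝ (cauchyW n lam (b + t • v)))) 0 0) :
    (cauchyW n lam x).mulVec b = sInf (spectrum ℝ (cauchyW n lam b)) • b :=
  critical_point_symmetry_general n lam b hb_unit x hx_unit hx_eig hcrit
end
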